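/- Let f₋ : Σ → ℝ³\{0} be a smooth minimal immersion (H₋ = 0) and let f₊ = I ∘ f₋ where I(x) = x/|x|² is the inversion at the unit sphere. If f₊ is also minimal (H₊ = 0), then the normal component f₋^⊥ of the position vector vanishes identically, i.e. ⟨f₋, ν₋⟩ = 0, so f₋ is a cone over the origin. -/

import Mathlib

open Set

noncomputable section

def dot3 (u v : Fin 3 → ℝ) : ℝ := ∑ i, u i * v i
def norm3 (u : Fin 3 → ℝ) : ℝ := Real.sqrt (dot3 u u)

/-- Partial derivatives of a parametrized surface `f : ℝ² → ℝ³`. -/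
def pdx (f : ℝ × ℝ → Fin 3 → ℝ) (p : ℝ × ℝ) : Fin 3 → ℝ := fderiv ℝ f p (1, 0)
def pdy (f : ℝ × ℝ → Fin 3 → ℝ) (p : ℝ × ℝ) : Fin 3 → ℝ := fderiv ℝ f p (0, 1)

/-- The unit normal `ν = (∂ₓf × ∂_yf)/|∂ₓf × ∂_yf|`. -/
def unitNormal (f : ℝ × ℝ → Fin 3 → ℝ) (p : ℝ × ℝ) : Fin 3 → ℝ :=
  (norm3 (crossProduct (pdx f p) (pdy f p)))⁻¹ • crossProduct (pdx f p) (pdy f p)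

/-- The (scalar) mean curvature `H = (EN - 2FM + GL)/(EG - F²)` of an immersed
parametrized surface `f : ℝ² → ℝ³`, with respect to the normal `ν`. -/
def meanCurv (f : ℝ × ℝ → Fin 3 → ℝ) (p : ℝ × ℝ) : ℝ :=
  let fx := pdx f p; let fy := pdy f p
  let fxx := pdx (pdx f) p; let fxy := pdy (pdx f) p; let fyy := pdy (pdy f) p
  let ν := unitNormal f p
  (dot3 fx fx * dot3 fyy ν - 2 * dot3 fx fy * dot3 fxy ν + dot3 fy fy * dot3 fxx ν) /
    (dot3 fx fx * dot3 fy fy - dot3 fx fy ^ 2)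

/-- The inversion `I(x) = x/|x|²` at the unit sphere. -/
def inv3 (v : Fin 3 → ℝ) : Fin 3 → ℝ := (dot3 v v)⁻¹ • v

/-! ### scalar directional-derivative toolkit -/

def Dv (v : ℝ × ℝ) (h : ℝ × ℝ → ℝ) (q : ℝ × ℝ) : ℝ := fderiv ℝ h q v

lemma Dv_add {v : ℝ × ℝ} {h k : ℝ × ℝ → ℝ} {q : ℝ × ℝ} (hh : DifferentiableAt ℝ h q)
    (hk : DifferentiableAt ℝ k q) :
    Dv v (fun x => h x + k x) q = Dv v h q + Dv v k q := by
  simp [Dv, fderiv_fun_add hh hk]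

lemma Dv_sub {v : ℝ × ℝ} {h k : ℝ × ℝ → ℝ} {q : ℝ × ℝ} (hh : DifferentiableAt ℝ h q)
    (hk : DifferentiableAt ℝ k q) :
    Dv v (fun x => h x - k x) q = Dv v h q - Dv v k q := by
  simp [Dv, fderiv_fun_sub hh hk]

lemma Dv_const_mul {v : ℝ × ℝ} {h : ℝ × ℝ → ℝ} {q : ℝ × ℝ} (c : ℝ)
    (hh : DifferentiableAt ℝ h q) :
    Dv v (fun x => c * h x) q = c * Dv v h q := by
  simp [Dv, fderiv_const_mul hh c]

lemma Dv_mul {v : ℝ × ℝ} {h k : ℝ × ℝ → ℝ} {q : ℝ × ℝ} (hh : DifferentiableAt ℝ h q)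
    (hk : DifferentiableAt ℝ k q) :
    Dv v (fun x => h x * k x) q = Dv v h q * k q + h q * Dv v k q := by
  simp [Dv, fderiv_fun_mul hh hk]; ring

lemma Dv_inv {v : ℝ × ℝ} {h : ℝ × ℝ → ℝ} {q : ℝ × ℝ} (hh : DifferentiableAt ℝ h q)
    (hne : h q ≠ 0) :
    Dv v (fun x => (h x)⁻¹) q = -(h q ^ 2)⁻¹ * Dv v h q := by
  have h2 : (fun x => (h x)⁻¹) = (fun y => y⁻¹) ∘ h := rfl
  have := ((hasDerivAt_inv hne).comp_hasFDerivAt q hh.hasFDerivAt).fderiv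
  rw [Dv, h2, this]
  simp only [ContinuousLinearMap.smul_apply, smul_eq_mul, neg_mul, Dv]

lemma Dv_congr {v : ℝ × ℝ} {h k : ℝ × ℝ → ℝ} {q : ℝ × ℝ} (he : h =ᶠ[nhds q] k) :
    Dv v h q = Dv v k q := by
  simp [Dv, he.fderiv_eq]

lemma Dv_contDiffOn {v : ℝ × ℝ} {h : ℝ × ℝ → ℝ} {U : Set (ℝ × ℝ)} (hU : IsOpen U)
    (hh : ContDiffOn ℝ (⊤ : ℕ∞) h U) : ContDiffOn ℝ (⊤ : ℕ∞) (Dv v h) U := by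
  have h1 : ContDiffOn ℝ (⊤ : ℕ∞) (fderiv ℝ h) U := hh.fderiv_of_isOpen hU (by simp)
  exact (ContinuousLinearMap.apply ℝ ℝ v).contDiff.comp_contDiffOn h1

lemma pd_contDiffOn {h : ℝ × ℝ → Fin 3 → ℝ} {U : Set (ℝ × ℝ)} (hU : IsOpen U)
    (hh : ContDiffOn ℝ (⊤ : ℕ∞) h U) (v : ℝ × ℝ) :
    ContDiffOn ℝ (⊤ : ℕ∞) (fun q => fderiv ℝ h q v) U := by
  have h1 : ContDiffOn ℝ (⊤ : ℕ∞) (fderiv ℝ h) U := hh.fderiv_of_isOpen hU (by simp)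
  exact (ContinuousLinearMap.apply ℝ (Fin 3 → ℝ) v).contDiff.comp_contDiffOn h1

lemma fderiv_apply_comp {f : ℝ × ℝ → Fin 3 → ℝ} {q : ℝ × ℝ} (hf : DifferentiableAt ℝ f q)
    (v : ℝ × ℝ) (i : Fin 3) : fderiv ℝ f q v i = Dv v (fun x => f x i) q := by
  have h2 : (fun x => f x i) =
      (ContinuousLinearMap.proj (R := ℝ) (φ := fun _ : Fin 3 => ℝ) i) ∘ f := rfl
  have := ((ContinuousLinearMap.proj (R := ℝ) (φ := fun _ : Fin 3 => ℝ) i).hasFDerivAt.comp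
    q hf.hasFDerivAt).fderiv
  rw [Dv, h2, this]; rfl

lemma pd2_comp {f : ℝ × ℝ → Fin 3 → ℝ} {p : ℝ × ℝ} (vin w : ℝ × ℝ)
    (hpd : DifferentiableAt ℝ (fun q => fderiv ℝ f q vin) p)
    (hev : ∀ᶠ q in nhds p, DifferentiableAt ℝ f q) (i : Fin 3) :
    fderiv ℝ (fun q => fderiv ℝ f q vin) p w i = Dv w (Dv vin (fun x => f x i)) p := by
  rw [fderiv_apply_comp hpd w i]
  have he : (fun q => fderiv ℝ f q vin i) =ᶠ[nhds p] Dv vin (fun x => f x i) :=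
    hev.mono fun q hq => fderiv_apply_comp hq vin i
  rw [Dv, Dv, he.fderiv_eq]

/-! ### vector algebra -/

def Rv (a w : Fin 3 → ℝ) : Fin 3 → ℝ := dot3 a a • w - (2 * dot3 a w) • a
def Qv (a u v : Fin 3 → ℝ) : Fin 3 → ℝ :=
  (-(2 * dot3 a u * dot3 a a)) • v + (-(2 * dot3 a v * dot3 a a)) • u +
    (-(2 * dot3 u v * dot3 a a)) • a + (8 * dot3 a u * dot3 a v) • a

lemma dot3_smul_right (c : ℝ) (u v : Fin 3 → ℝ) : dot3 u (c • v) = c * dot3 u v := by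
  simp [dot3, Fin.sum_univ_three]; ring
lemma dot3_smul_left (c : ℝ) (u v : Fin 3 → ℝ) : dot3 (c • u) v = c * dot3 u v := by
  simp [dot3, Fin.sum_univ_three]; ring
lemma dot3_add_left (u v w : Fin 3 → ℝ) : dot3 (u + v) w = dot3 u w + dot3 v w := by
  simp [dot3, Fin.sum_univ_three]; ring
lemma dot3_self_pos {v : Fin 3 → ℝ} (hv : v ≠ 0) : 0 < dot3 v v := by
  obtain ⟨i, hi⟩ := Function.ne_iff.mp hv
  refine Finset.sum_pos' (fun j _ => mul_self_nonneg _) ⟨i, Finset.mem_univ i, ?_⟩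
  exact mul_self_pos.mpr hi
lemma norm3_ne {v : Fin 3 → ℝ} (hv : v ≠ 0) : norm3 v ≠ 0 :=
  ne_of_gt (Real.sqrt_pos.mpr (dot3_self_pos hv))
lemma cross_dot_self_left (u v : Fin 3 → ℝ) : dot3 u (crossProduct u v) = 0 := by
  simp [dot3, cross_apply, Fin.sum_univ_three]; ring
lemma cross_dot_self_right (u v : Fin 3 → ℝ) : dot3 v (crossProduct u v) = 0 := by
  simp [dot3, cross_apply, Fin.sum_univ_three]; ring
lemma lagrange (u v : Fin 3 → ℝ) :
    dot3 (crossProduct u v) (crossProduct u v) = dot3 u u * dot3 v v - dot3 u v ^ 2 := by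
  simp [dot3, cross_apply, Fin.sum_univ_three]; ring
lemma cross_smul_smul (c d : ℝ) (u v : Fin 3 → ℝ) :
    crossProduct (c • u) (d • v) = (c * d) • crossProduct u v := by
  funext i; fin_cases i <;> simp [cross_apply] <;> ring
lemma dotRR (a u v : Fin 3 → ℝ) : dot3 (Rv a u) (Rv a v) = (dot3 a a) ^ 2 * dot3 u v := by
  simp [Rv, dot3, Fin.sum_univ_three]; ring
lemma crossRR (a u v : Fin 3 → ℝ) :
    crossProduct (Rv a u) (Rv a v) = (-(dot3 a a)) • Rv a (crossProduct u v) := by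
  funext i
  fin_cases i <;>
    simp [Rv, cross_apply, dot3, Fin.sum_univ_three, Matrix.vecHead, Matrix.vecTail,
      Pi.smul_apply, smul_eq_mul] <;> ring
lemma dotQR (a u v z : Fin 3 → ℝ) :
    dot3 (Qv a u v) (Rv a z) =
      2 * (dot3 a a) ^ 2 *
        (dot3 u v * dot3 a z - dot3 a u * dot3 v z - dot3 a v * dot3 u z) := by
  simp [Qv, Rv, dot3, Fin.sum_univ_three]; ring

lemma endgame (s E F G L M Nn an : ℝ) (hs : s ≠ 0) (hW : E * G - F ^ 2 ≠ 0)
    (hNm : E * Nn - 2 * F * M + G * L = 0)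
    (hNp : ((s*s)⁻¹*((s*s)⁻¹*(s^2*E))) * ((s^3)⁻¹*(((s*s)⁻¹*(s*s)⁻¹*(-s))*(2*s^2*(G*an) + s*(s^2*Nn))))
      - 2 * ((s*s)⁻¹*((s*s)⁻¹*(s^2*F))) * ((s^3)⁻¹*(((s*s)⁻¹*(s*s)⁻¹*(-s))*(2*s^2*(F*an) + s*(s^2*M))))
      + ((s*s)⁻¹*((s*s)⁻¹*(s^2*G))) * ((s^3)⁻¹*(((s*s)⁻¹*(s*s)⁻¹*(-s))*(2*s^2*(E*an) + s*(s^2*L)))) = 0) :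
    an = 0 := by
  have key : s^6 * (((s*s)⁻¹*((s*s)⁻¹*(s^2*E))) * ((s^3)⁻¹*(((s*s)⁻¹*(s*s)⁻¹*(-s))*(2*s^2*(G*an) + s*(s^2*Nn))))
      - 2 * ((s*s)⁻¹*((s*s)⁻¹*(s^2*F))) * ((s^3)⁻¹*(((s*s)⁻¹*(s*s)⁻¹*(-s))*(2*s^2*(F*an) + s*(s^2*M))))
      + ((s*s)⁻¹*((s*s)⁻¹*(s^2*G))) * ((s^3)⁻¹*(((s*s)⁻¹*(s*s)⁻¹*(-s))*(2*s^2*(E*an) + s*(s^2*L)))))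
      = -(s * (E * Nn - 2 * F * M + G * L)) - 4 * (E * G - F ^ 2) * an := by
    field_simp
    ring
  rw [hNp, hNm, mul_zero] at key
  have h4 : 4 * (E * G - F ^ 2) * an = 0 := by linarith
  have := mul_ne_zero (by norm_num : (4:ℝ) ≠ 0) hW
  exact (mul_eq_zero.mp (by linarith [h4] : (4 * (E * G - F ^ 2)) * an = 0)).resolve_left this


/-- let `f₋` be a smooth minimal immersion (`H₋ = 0`) into
`ℝ³ \ {0}` (parametrized over an open set `U ⊆ ℝ²`), and let `f₊ = I ∘ f₋` be
its inversion at the unit sphere.  If `f₊` is also minimal (`H₊ = 0`), then the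
normal component of the position vector vanishes identically, `⟨f₋, ν₋⟩ = 0`,
i.e. `f₋` is a cone over the origin. -/
theorem inversion_minimal_implies_cone (U : Set (ℝ × ℝ)) (hU : IsOpen U)
    (f : ℝ × ℝ → Fin 3 → ℝ) (hsm : ContDiffOn ℝ (⊤ : ℕ∞) f U)
    (hnonzero : ∀ p ∈ U, f p ≠ 0)
    (himm : ∀ p ∈ U, crossProduct (pdx f p) (pdy f p) ≠ 0)
    (hmin : ∀ p ∈ U, meanCurv f p = 0)
    (hmininv : ∀ p ∈ U, meanCurv (fun q => inv3 (f q)) p = 0) :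
    ∀ p ∈ U, dot3 (f p) (unitNormal f p) = 0 := by
  intro p hp
  have hUp : U ∈ nhds p := hU.mem_nhds hp
  set g : ℝ × ℝ → Fin 3 → ℝ := fun q => inv3 (f q) with hgdef
  set ρ : ℝ × ℝ → ℝ := fun q => dot3 (f q) (f q) with hρdef
  set Fi : Fin 3 → ℝ × ℝ → ℝ := fun i q => f q i with hFidef
  set Gi : Fin 3 → ℝ × ℝ → ℝ := fun i q => (ρ q)⁻¹ * f q i with hGidef
  -- smoothness
  have hFs : ∀ i, ContDiffOn ℝ (⊤ : ℕ∞) (Fi i) U := fun i => contDiffOn_pi.mp hsm i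
  have hρs : ContDiffOn ℝ (⊤ : ℕ∞) ρ U := by
    have : ContDiffOn ℝ (⊤ : ℕ∞) (fun q => ∑ i : Fin 3, f q i * f q i) U :=
      ContDiffOn.sum (fun i _ => (hFs i).mul (hFs i))
    exact this
  have hρne : ∀ q ∈ U, ρ q ≠ 0 := fun q hq => ne_of_gt (dot3_self_pos (hnonzero q hq))
  have dAt : ∀ {h : ℝ × ℝ → ℝ}, ContDiffOn ℝ (⊤ : ℕ∞) h U → ∀ {q}, q ∈ U →
      DifferentiableAt ℝ h q :=
    by intro h hh q hq; exact (hh.differentiableOn (by simp)).differentiableAt (hU.mem_nhds hq)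
  have dAtv : ∀ {h : ℝ × ℝ → Fin 3 → ℝ}, ContDiffOn ℝ (⊤ : ℕ∞) h U → ∀ {q}, q ∈ U →
      DifferentiableAt ℝ h q :=
    by intro h hh q hq; exact (hh.differentiableOn (by simp)).differentiableAt (hU.mem_nhds hq)
  have hGs : ∀ i, ContDiffOn ℝ (⊤ : ℕ∞) (Gi i) U := fun i => (hρs.inv hρne).mul (hFs i)
  have hGieq : ∀ i, (fun x => g x i) = Gi i := fun i => funext fun x => by
    simp [hgdef, inv3, hρdef, hGidef]
  have hgs : ContDiffOn ℝ (⊤ : ℕ∞) g U := contDiffOn_pi.mpr fun i => (hGieq i) ▸ (hGs i)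
  -- first derivatives of Gi on U
  have hG1 : ∀ (i : Fin 3) (v : ℝ × ℝ), ∀ q ∈ U, Dv v (Gi i) q =
      (ρ q * ρ q)⁻¹ * (ρ q * Dv v (Fi i) q - Dv v ρ q * f q i) := by
    intro i v q hq
    have h1 : Dv v (fun x => (ρ x)⁻¹ * Fi i x) q
        = Dv v (fun x => (ρ x)⁻¹) q * Fi i q + (ρ q)⁻¹ * Dv v (Fi i) q :=
      Dv_mul ((dAt hρs hq).inv (hρne q hq)) (dAt (hFs i) hq)
    have h2 : Dv v (fun x => (ρ x)⁻¹) q = -(ρ q ^ 2)⁻¹ * Dv v ρ q :=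
      Dv_inv (dAt hρs hq) (hρne q hq)
    have h3 : Gi i = fun x => (ρ x)⁻¹ * Fi i x := rfl
    rw [h3, h1, h2]
    have hρq := hρne q hq
    show -(ρ q ^ 2)⁻¹ * Dv v ρ q * f q i + (ρ q)⁻¹ * Dv v (Fi i) q = _
    field_simp
    ring
  -- second derivatives of Gi at p
  have hG2 : ∀ (i : Fin 3) (v w : ℝ × ℝ), Dv w (Dv v (Gi i)) p =
      (ρ p)⁻¹ * Dv w (Dv v (Fi i)) p
        - ((ρ p)^2)⁻¹ * (Dv v ρ p * Dv w (Fi i) p + Dv w ρ p * Dv v (Fi i) p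
            + Dv w (Dv v ρ) p * f p i)
        + 2 * ((ρ p)^3)⁻¹ * Dv v ρ p * Dv w ρ p * f p i := by
    intro i v w
    have hEe : Dv v (Gi i) =ᶠ[nhds p]
        fun q => (ρ q * ρ q)⁻¹ * (ρ q * Dv v (Fi i) q - Dv v ρ q * f q i) :=
      Filter.eventuallyEq_of_mem hUp (fun q hq => hG1 i v q hq)
    rw [Dv_congr hEe]
    -- differentiability at p of the pieces
    have hρp : DifferentiableAt ℝ ρ p := dAt hρs hp
    have hσp : DifferentiableAt ℝ (fun q => ρ q * ρ q) p := hρp.mul hρp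
    have hσne : ρ p * ρ p ≠ 0 := mul_ne_zero (hρne p hp) (hρne p hp)
    have hXv : DifferentiableAt ℝ (Dv v (Fi i)) p := dAt (Dv_contDiffOn hU (hFs i)) hp
    have hXw : DifferentiableAt ℝ (Dv w (Fi i)) p := dAt (Dv_contDiffOn hU (hFs i)) hp
    have hRv' : DifferentiableAt ℝ (Dv v ρ) p := dAt (Dv_contDiffOn hU hρs) hp
    have hAi : DifferentiableAt ℝ (Fi i) p := dAt (hFs i) hp
    have hK : DifferentiableAt ℝ (fun q => ρ q * Dv v (Fi i) q - Dv v ρ q * f q i) p :=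
      (hρp.mul hXv).sub (hRv'.mul hAi)
    have hInv : DifferentiableAt ℝ (fun q => (ρ q * ρ q)⁻¹) p := hσp.inv hσne
    rw [Dv_mul hInv hK, Dv_inv hσp hσne, Dv_sub (hρp.fun_mul hXv) (hRv'.fun_mul hAi),
      Dv_mul hρp hXv, Dv_mul hRv' hAi, Dv_mul hρp hρp]
    have h5 : Dv w (Fi i) p = fderiv ℝ (Fi i) p w := rfl
    have hρ0 := hρne p hp
    show (-((ρ p * ρ p) ^ 2)⁻¹ * (Dv w ρ p * ρ p + ρ p * Dv w ρ p)) *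
        (ρ p * Dv v (Fi i) p - Dv v ρ p * f p i)
        + (ρ p * ρ p)⁻¹ * ((Dv w ρ p * Dv v (Fi i) p + ρ p * Dv w (Dv v (Fi i)) p)
            - (Dv w (Dv v ρ) p * Fi i p + Dv v ρ p * Dv w (Fi i) p)) = _
    have : Fi i p = f p i := rfl
    rw [this]
    field_simp
    ring
  -- derivatives of ρ
  have hρexp : ρ = fun q => Fi 0 q * Fi 0 q + Fi 1 q * Fi 1 q + Fi 2 q * Fi 2 q :=
    funext fun q => by simp [hρdef, dot3, Fin.sum_univ_three, hFidef]
  have hρ1 : ∀ (v : ℝ × ℝ), ∀ q ∈ U, Dv v ρ q =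
      2 * (f q 0 * Dv v (Fi 0) q + f q 1 * Dv v (Fi 1) q + f q 2 * Dv v (Fi 2) q) := by
    intro v q hq
    have d0 : DifferentiableAt ℝ (Fi 0) q := dAt (hFs 0) hq
    have d1 : DifferentiableAt ℝ (Fi 1) q := dAt (hFs 1) hq
    have d2 : DifferentiableAt ℝ (Fi 2) q := dAt (hFs 2) hq
    rw [hρexp, Dv_add ((d0.fun_mul d0).fun_add (d1.fun_mul d1)) (d2.fun_mul d2),
      Dv_add (d0.fun_mul d0) (d1.fun_mul d1), Dv_mul d0 d0, Dv_mul d1 d1, Dv_mul d2 d2]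
    have h0 : Fi 0 q = f q 0 := rfl
    have h1 : Fi 1 q = f q 1 := rfl
    have h2 : Fi 2 q = f q 2 := rfl
    rw [h0, h1, h2]; ring
  have hρ2 : ∀ (v w : ℝ × ℝ), Dv w (Dv v ρ) p =
      2 * ((Dv w (Fi 0) p * Dv v (Fi 0) p + f p 0 * Dv w (Dv v (Fi 0)) p)
        + (Dv w (Fi 1) p * Dv v (Fi 1) p + f p 1 * Dv w (Dv v (Fi 1)) p)
        + (Dv w (Fi 2) p * Dv v (Fi 2) p + f p 2 * Dv w (Dv v (Fi 2)) p)) := by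
    intro v w
    have hEe : Dv v ρ =ᶠ[nhds p] fun q =>
        2 * (Fi 0 q * Dv v (Fi 0) q + Fi 1 q * Dv v (Fi 1) q + Fi 2 q * Dv v (Fi 2) q) :=
      Filter.eventuallyEq_of_mem hUp (fun q hq => hρ1 v q hq)
    rw [Dv_congr hEe]
    have dF : ∀ i : Fin 3, DifferentiableAt ℝ (Fi i) p := fun i => dAt (hFs i) hp
    have dX : ∀ i : Fin 3, DifferentiableAt ℝ (Dv v (Fi i)) p :=
      fun i => dAt (Dv_contDiffOn hU (hFs i)) hp
    rw [Dv_const_mul 2 ((((dF 0).fun_mul (dX 0)).fun_add ((dF 1).fun_mul (dX 1))).fun_add ((dF 2).fun_mul (dX 2))),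
      Dv_add (((dF 0).fun_mul (dX 0)).fun_add ((dF 1).fun_mul (dX 1))) ((dF 2).fun_mul (dX 2)),
      Dv_add ((dF 0).fun_mul (dX 0)) ((dF 1).fun_mul (dX 1)),
      Dv_mul (dF 0) (dX 0), Dv_mul (dF 1) (dX 1), Dv_mul (dF 2) (dX 2)]
  -- differentiability bookkeeping
  have hfdp : DifferentiableAt ℝ f p := dAtv hsm hp
  have hgdp : DifferentiableAt ℝ g p := dAtv hgs hp
  have hevf : ∀ᶠ q in nhds p, DifferentiableAt ℝ f q :=
    Filter.eventually_of_mem hUp (fun q hq => dAtv hsm hq)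
  have hevg : ∀ᶠ q in nhds p, DifferentiableAt ℝ g q :=
    Filter.eventually_of_mem hUp (fun q hq => dAtv hgs hq)
  have hpdxf : DifferentiableAt ℝ (fun q => fderiv ℝ f q (1,0)) p :=
    dAtv (pd_contDiffOn hU hsm (1,0)) hp
  have hpdyf : DifferentiableAt ℝ (fun q => fderiv ℝ f q (0,1)) p :=
    dAtv (pd_contDiffOn hU hsm (0,1)) hp
  have hpdxg : DifferentiableAt ℝ (fun q => fderiv ℝ g q (1,0)) p :=
    dAtv (pd_contDiffOn hU hgs (1,0)) hp
  have hpdyg : DifferentiableAt ℝ (fun q => fderiv ℝ g q (0,1)) p :=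
    dAtv (pd_contDiffOn hU hgs (0,1)) hp
  -- the six basic vectors
  set vA : Fin 3 → ℝ := fun i => f p i with hvA
  set vX : Fin 3 → ℝ := fun i => Dv (1,0) (Fi i) p with hvX
  set vY : Fin 3 → ℝ := fun i => Dv (0,1) (Fi i) p with hvY
  set vXX : Fin 3 → ℝ := fun i => Dv (1,0) (Dv (1,0) (Fi i)) p with hvXX
  set vXY : Fin 3 → ℝ := fun i => Dv (0,1) (Dv (1,0) (Fi i)) p with hvXY
  set vYY : Fin 3 → ℝ := fun i => Dv (0,1) (Dv (0,1) (Fi i)) p with hvYY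
  have hfxV : pdx f p = vX := funext fun i => fderiv_apply_comp hfdp (1,0) i
  have hfyV : pdy f p = vY := funext fun i => fderiv_apply_comp hfdp (0,1) i
  have hfxxV : pdx (pdx f) p = vXX := funext fun i => pd2_comp (1,0) (1,0) hpdxf hevf i
  have hfxyV : pdy (pdx f) p = vXY := funext fun i => pd2_comp (1,0) (0,1) hpdxf hevf i
  have hfyyV : pdy (pdy f) p = vYY := funext fun i => pd2_comp (0,1) (0,1) hpdyf hevf i
  -- scalar helpers
  have hsp : ρ p = dot3 vA vA := by simp [hρdef, dot3, hvA]
  have hsne : dot3 vA vA ≠ 0 := hsp ▸ hρne p hp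
  have hu1 : Dv (1,0) ρ p = 2 * dot3 vA vX := by
    rw [hρ1 (1,0) p hp]; simp [dot3, Fin.sum_univ_three, hvA, hvX]
  have hu2 : Dv (0,1) ρ p = 2 * dot3 vA vY := by
    rw [hρ1 (0,1) p hp]; simp [dot3, Fin.sum_univ_three, hvA, hvY]
  have hm11 : Dv (1,0) (Dv (1,0) ρ) p = 2 * (dot3 vX vX + dot3 vA vXX) := by
    rw [hρ2 (1,0) (1,0)]; simp [dot3, Fin.sum_univ_three, hvA, hvX, hvXX]; ring
  have hm21 : Dv (0,1) (Dv (1,0) ρ) p = 2 * (dot3 vX vY + dot3 vA vXY) := by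
    rw [hρ2 (1,0) (0,1)]; simp [dot3, Fin.sum_univ_three, hvA, hvX, hvY, hvXY]; ring
  have hm22 : Dv (0,1) (Dv (0,1) ρ) p = 2 * (dot3 vY vY + dot3 vA vYY) := by
    rw [hρ2 (0,1) (0,1)]; simp [dot3, Fin.sum_univ_three, hvA, hvY, hvYY]; ring
  -- first derivatives of g, vector form
  have hgx : ∀ i, pdx g p i = Dv (1,0) (Gi i) p := fun i => by
    rw [show pdx g p = fderiv ℝ g p (1,0) from rfl, fderiv_apply_comp hgdp (1,0) i, hGieq i]
  have hgy : ∀ i, pdy g p i = Dv (0,1) (Gi i) p := fun i => by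
    rw [show pdy g p = fderiv ℝ g p (0,1) from rfl, fderiv_apply_comp hgdp (0,1) i, hGieq i]
  have hgxV : pdx g p = ((dot3 vA vA * dot3 vA vA)⁻¹) • Rv vA vX := by
    funext i
    rw [hgx i, hG1 i (1,0) p hp, hsp, hu1]
    have e1 : Dv (1,0) (Fi i) p = vX i := by rw [hvX]
    have e2 : f p i = vA i := by rw [hvA]
    rw [e1, e2]
    simp only [Pi.smul_apply, smul_eq_mul, Rv, Pi.sub_apply]
  have hgyV : pdy g p = ((dot3 vA vA * dot3 vA vA)⁻¹) • Rv vA vY := by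
    funext i
    rw [hgy i, hG1 i (0,1) p hp, hsp, hu2]
    have e1 : Dv (0,1) (Fi i) p = vY i := by rw [hvY]
    have e2 : f p i = vA i := by rw [hvA]
    rw [e1, e2]
    simp only [Pi.smul_apply, smul_eq_mul, Rv, Pi.sub_apply]
  -- second derivatives of g, vector form
  have hgxxV : pdx (pdx g) p =
      ((dot3 vA vA ^ 3)⁻¹) • (Qv vA vX vX + dot3 vA vA • Rv vA vXX) := by
    funext i
    rw [show pdx (pdx g) p = fderiv ℝ (fun q => fderiv ℝ g q (1,0)) p (1,0) from rfl,
      pd2_comp (1,0) (1,0) hpdxg hevg i, show (fun x => g x i) = Gi i from hGieq i,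
      hG2 i (1,0) (1,0), hsp, hu1, hm11]
    have e1 : Dv (1,0) (Fi i) p = vX i := by rw [hvX]
    have e3 : Dv (1,0) (Dv (1,0) (Fi i)) p = vXX i := by rw [hvXX]
    have e2 : f p i = vA i := by rw [hvA]
    rw [e1, e3, e2]
    simp only [Pi.smul_apply, smul_eq_mul, Rv, Qv, Pi.sub_apply, Pi.add_apply]
    field_simp [hsne]
    ring
  have hgxyV : pdy (pdx g) p =
      ((dot3 vA vA ^ 3)⁻¹) • (Qv vA vX vY + dot3 vA vA • Rv vA vXY) := by
    funext i
    rw [show pdy (pdx g) p = fderiv ℝ (fun q => fderiv ℝ g q (1,0)) p (0,1) from rfl,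
      pd2_comp (1,0) (0,1) hpdxg hevg i, show (fun x => g x i) = Gi i from hGieq i,
      hG2 i (1,0) (0,1), hsp, hu1, hu2, hm21]
    have e1 : Dv (1,0) (Fi i) p = vX i := by rw [hvX]
    have e1' : Dv (0,1) (Fi i) p = vY i := by rw [hvY]
    have e3 : Dv (0,1) (Dv (1,0) (Fi i)) p = vXY i := by rw [hvXY]
    have e2 : f p i = vA i := by rw [hvA]
    rw [e1, e1', e3, e2]
    simp only [Pi.smul_apply, smul_eq_mul, Rv, Qv, Pi.sub_apply, Pi.add_apply]
    field_simp [hsne]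
    ring
  have hgyyV : pdy (pdy g) p =
      ((dot3 vA vA ^ 3)⁻¹) • (Qv vA vY vY + dot3 vA vA • Rv vA vYY) := by
    funext i
    rw [show pdy (pdy g) p = fderiv ℝ (fun q => fderiv ℝ g q (0,1)) p (0,1) from rfl,
      pd2_comp (0,1) (0,1) hpdyg hevg i, show (fun x => g x i) = Gi i from hGieq i,
      hG2 i (0,1) (0,1), hsp, hu2, hm22]
    have e1 : Dv (0,1) (Fi i) p = vY i := by rw [hvY]
    have e3 : Dv (0,1) (Dv (0,1) (Fi i)) p = vYY i := by rw [hvYY]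
    have e2 : f p i = vA i := by rw [hvA]
    rw [e1, e3, e2]
    simp only [Pi.smul_apply, smul_eq_mul, Rv, Qv, Pi.sub_apply, Pi.add_apply]
    field_simp [hsne]
    ring
  -- minus side
  have hnne : crossProduct vX vY ≠ 0 := by rw [← hfxV, ← hfyV]; exact himm p hp
  have hm := hmin p hp
  simp only [meanCurv, unitNormal] at hm
  rw [hfxV, hfyV, hfxxV, hfxyV, hfyyV] at hm
  have hdenf : dot3 vX vX * dot3 vY vY - dot3 vX vY ^ 2 ≠ 0 := by
    rw [← lagrange vX vY]; exact (dot3_self_pos hnne).ne'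
  have hnum := (div_eq_zero_iff.mp hm).resolve_right hdenf
  simp only [dot3_smul_right] at hnum
  have hw0 : (norm3 (crossProduct vX vY))⁻¹ ≠ 0 := inv_ne_zero (norm3_ne hnne)
  have hNm : dot3 vX vX * dot3 vYY (crossProduct vX vY)
      - 2 * dot3 vX vY * dot3 vXY (crossProduct vX vY)
      + dot3 vY vY * dot3 vXX (crossProduct vX vY) = 0 := by
    have h2 : (norm3 (crossProduct vX vY))⁻¹ * (dot3 vX vX * dot3 vYY (crossProduct vX vY)
        - 2 * dot3 vX vY * dot3 vXY (crossProduct vX vY)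
        + dot3 vY vY * dot3 vXX (crossProduct vX vY)) = 0 := by
      linear_combination hnum
    exact (mul_eq_zero.mp h2).resolve_left hw0
  -- plus side
  have hmg := hmininv p hp
  simp only [meanCurv, unitNormal] at hmg
  have hngV : crossProduct (pdx g p) (pdy g p) =
      (((dot3 vA vA * dot3 vA vA)⁻¹ * (dot3 vA vA * dot3 vA vA)⁻¹) * -(dot3 vA vA)) •
        Rv vA (crossProduct vX vY) := by
    rw [hgxV, hgyV, cross_smul_smul, crossRR, smul_smul]
  have hsc : (((dot3 vA vA * dot3 vA vA)⁻¹ * (dot3 vA vA * dot3 vA vA)⁻¹) * -(dot3 vA vA)) ≠ 0 :=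
    mul_ne_zero (mul_ne_zero (inv_ne_zero (mul_ne_zero hsne hsne))
      (inv_ne_zero (mul_ne_zero hsne hsne))) (neg_ne_zero.mpr hsne)
  have hRn : Rv vA (crossProduct vX vY) ≠ 0 := by
    intro h0
    have hd := dotRR vA (crossProduct vX vY) (crossProduct vX vY)
    rw [h0] at hd
    simp only [dot3, Pi.zero_apply, mul_zero, zero_mul, Finset.sum_const_zero] at hd
    exact (mul_ne_zero (pow_ne_zero 2 hsne) (dot3_self_pos hnne).ne') hd.symm
  have hngne : crossProduct (pdx g p) (pdy g p) ≠ 0 := by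
    rw [hngV]; exact smul_ne_zero hsc hRn
  have hdeng : dot3 (pdx g p) (pdx g p) * dot3 (pdy g p) (pdy g p)
      - dot3 (pdx g p) (pdy g p) ^ 2 ≠ 0 := by
    rw [← lagrange (pdx g p) (pdy g p)]; exact (dot3_self_pos hngne).ne'
  have hnumg := (div_eq_zero_iff.mp hmg).resolve_right hdeng
  rw [hngV, hgxV, hgyV, hgxxV, hgxyV, hgyyV] at hnumg
  simp only [dot3_smul_right, dot3_smul_left, dot3_add_left, dotRR, dotQR,
    cross_dot_self_left, cross_dot_self_right, mul_zero, sub_zero, mul_neg, neg_mul,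
    neg_neg, zero_sub, neg_zero] at hnumg
  have hsc' : -((dot3 vA vA * dot3 vA vA)⁻¹ * (dot3 vA vA * dot3 vA vA)⁻¹ * dot3 vA vA) ≠ 0 :=
    neg_ne_zero.mpr (mul_ne_zero (mul_ne_zero (inv_ne_zero (mul_ne_zero hsne hsne))
      (inv_ne_zero (mul_ne_zero hsne hsne))) hsne)
  have hwgne : (norm3 ((-((dot3 vA vA * dot3 vA vA)⁻¹ * (dot3 vA vA * dot3 vA vA)⁻¹ *
      dot3 vA vA)) • Rv vA (crossProduct vX vY)))⁻¹ ≠ 0 :=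
    inv_ne_zero (norm3_ne (smul_ne_zero hsc' hRn))
  have hNpw : (norm3 ((-((dot3 vA vA * dot3 vA vA)⁻¹ * (dot3 vA vA * dot3 vA vA)⁻¹ *
        dot3 vA vA)) • Rv vA (crossProduct vX vY)))⁻¹ *
      (((dot3 vA vA * dot3 vA vA)⁻¹*((dot3 vA vA * dot3 vA vA)⁻¹*(dot3 vA vA^2*(dot3 vX vX)))) *
          ((dot3 vA vA^3)⁻¹*(((dot3 vA vA * dot3 vA vA)⁻¹*(dot3 vA vA * dot3 vA vA)⁻¹*(-(dot3 vA vA)))*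
            (2*(dot3 vA vA)^2*((dot3 vY vY)*(dot3 vA (crossProduct vX vY)))
              + dot3 vA vA*((dot3 vA vA)^2*(dot3 vYY (crossProduct vX vY))))))
        - 2 * ((dot3 vA vA * dot3 vA vA)⁻¹*((dot3 vA vA * dot3 vA vA)⁻¹*(dot3 vA vA^2*(dot3 vX vY)))) *
          ((dot3 vA vA^3)⁻¹*(((dot3 vA vA * dot3 vA vA)⁻¹*(dot3 vA vA * dot3 vA vA)⁻¹*(-(dot3 vA vA)))*
            (2*(dot3 vA vA)^2*((dot3 vX vY)*(dot3 vA (crossProduct vX vY)))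
              + dot3 vA vA*((dot3 vA vA)^2*(dot3 vXY (crossProduct vX vY))))))
        + ((dot3 vA vA * dot3 vA vA)⁻¹*((dot3 vA vA * dot3 vA vA)⁻¹*(dot3 vA vA^2*(dot3 vY vY)))) *
          ((dot3 vA vA^3)⁻¹*(((dot3 vA vA * dot3 vA vA)⁻¹*(dot3 vA vA * dot3 vA vA)⁻¹*(-(dot3 vA vA)))*
            (2*(dot3 vA vA)^2*((dot3 vX vX)*(dot3 vA (crossProduct vX vY)))
              + dot3 vA vA*((dot3 vA vA)^2*(dot3 vXX (crossProduct vX vY))))))) = 0 := by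
    linear_combination hnumg
  have hNp := (mul_eq_zero.mp hNpw).resolve_left hwgne
  have han : dot3 vA (crossProduct vX vY) = 0 := by
    refine endgame (dot3 vA vA) (dot3 vX vX) (dot3 vX vY) (dot3 vY vY)
      (dot3 vXX (crossProduct vX vY)) (dot3 vXY (crossProduct vX vY))
      (dot3 vYY (crossProduct vX vY)) (dot3 vA (crossProduct vX vY)) hsne hdenf hNm ?_
    linear_combination hNp
  show dot3 (f p) (unitNormal f p) = 0
  simp only [unitNormal]
  rw [hfxV, hfyV, dot3_smul_right, show f p = vA from rfl, han, mul_zero]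


end
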